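/- Under the assumptions of the previous setting (z ~ N(μ, diag(σ²)), z|x ~ N(μ(x), diag(σ(x)²)), law of total expectation and total variance holding coordinatewise), the expected KL divergence satisfies the lower bound E_x[KL(q(z|x) ‖ p(z))] ≥ d/2 − (1/2) Σ_{j=1}^d E_x[ Var(z_j|x) / Var(z_j) ]. -/
import Mathlib

open MeasureTheory Real

theorem stmt_2 {Ω : Type*} [MeasurableSpace Ω] (P : Measure Ω) [IsProbabilityMeasure P]
    (d : ℕ) (μx vx : Ω → Fin d → ℝ) (μ0 v0 : Fin d → ℝ)
    (hv0 : ∀ j, 0 < v0 j) (hvx : ∀ x j, 0 < vx x j)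
    (hmean : ∀ j, ∫ x, μx x j ∂P = μ0 j)
    (htotvar : ∀ j, v0 j = (∫ x, (μx x j - μ0 j) ^ 2 ∂P) + ∫ x, vx x j ∂P)
    (hint1 : ∀ j, Integrable (fun x => (μx x j - μ0 j) ^ 2) P)
    (hint2 : ∀ j, Integrable (fun x => vx x j) P)
    (hint3 : ∀ j, Integrable (fun x => Real.log (v0 j / vx x j)) P)
    (hintKL : Integrable (fun x => (1 / 2) * ∑ j, ((μx x j - μ0 j) ^ 2 / v0 j
        + vx x j / v0 j + Real.log (v0 j / vx x j) - 1)) P) :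
    ∫ x, (1 / 2) * ∑ j, ((μx x j - μ0 j) ^ 2 / v0 j + vx x j / v0 j
        + Real.log (v0 j / vx x j) - 1) ∂P
      ≥ (d : ℝ) / 2 - (1 / 2) * ∑ j, ∫ x, vx x j / v0 j ∂P := by
  have hfint : ∀ j : Fin d, Integrable (fun x => (μx x j - μ0 j) ^ 2 / v0 j
      + vx x j / v0 j + Real.log (v0 j / vx x j) - 1) P := by
    intro j
    exact ((((hint1 j).div_const _).add ((hint2 j).div_const _)).add (hint3 j)).sub
      (integrable_const 1)
  -- pointwise bound for the log term
  have hpt : ∀ j : Fin d, ∀ x, 1 - vx x j / v0 j ≤ Real.log (v0 j / vx x j) := by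
    intro j x
    have hlog : Real.log (vx x j / v0 j) ≤ vx x j / v0 j - 1 :=
      Real.log_le_sub_one_of_pos (div_pos (hvx x j) (hv0 j))
    have hloginv : Real.log (v0 j / vx x j) = - Real.log (vx x j / v0 j) := by
      rw [← Real.log_inv, inv_div]
    rw [hloginv]; linarith
  -- swap integral with sum and constant
  rw [MeasureTheory.integral_const_mul]
  rw [MeasureTheory.integral_finset_sum _ (fun j _ => hfint j)]
  have hsum : ∀ j : Fin d,
      1 - ∫ x, vx x j / v0 j ∂P ≤
      ∫ x, ((μx x j - μ0 j) ^ 2 / v0 j + vx x j / v0 j + Real.log (v0 j / vx x j) - 1) ∂P := by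
    intro j
    have h1 : ∫ x, (1 - vx x j / v0 j) ∂P = 1 - ∫ x, vx x j / v0 j ∂P := by
      rw [MeasureTheory.integral_sub (integrable_const 1) ((hint2 j).div_const _)]
      simp
    have h2 : 1 - ∫ x, vx x j / v0 j ∂P ≤ ∫ x, Real.log (v0 j / vx x j) ∂P := by
      rw [← h1]
      exact integral_mono ((integrable_const 1).sub ((hint2 j).div_const _)) (hint3 j) (hpt j)
    have h3 : ∫ x, ((μx x j - μ0 j) ^ 2 / v0 j + vx x j / v0 j + Real.log (v0 j / vx x j) - 1) ∂P
        = (∫ x, (μx x j - μ0 j) ^ 2 ∂P) / v0 j + (∫ x, vx x j ∂P) / v0 j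
          + (∫ x, Real.log (v0 j / vx x j) ∂P) - 1 := by
      have hIa : Integrable (fun x => (μx x j - μ0 j) ^ 2 / v0 j + vx x j / v0 j) P :=
        ((hint1 j).div_const _).add ((hint2 j).div_const _)
      have hIb : Integrable (fun x => (μx x j - μ0 j) ^ 2 / v0 j + vx x j / v0 j
          + Real.log (v0 j / vx x j)) P := hIa.add (hint3 j)
      rw [MeasureTheory.integral_sub hIb (integrable_const 1)]
      rw [MeasureTheory.integral_add hIa (hint3 j)]
      rw [MeasureTheory.integral_add ((hint1 j).div_const _) ((hint2 j).div_const _)]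
      simp [integral_div]
    have hv0ne : v0 j ≠ 0 := (hv0 j).ne'
    have htv := htotvar j
    have h4 : (∫ x, (μx x j - μ0 j) ^ 2 ∂P) / v0 j + (∫ x, vx x j ∂P) / v0 j = 1 := by
      field_simp
      linarith
    rw [h3, h4]
    linarith
  have : (d : ℝ) - ∑ j, ∫ x, vx x j / v0 j ∂P ≤
      ∑ j, ∫ x, ((μx x j - μ0 j) ^ 2 / v0 j + vx x j / v0 j + Real.log (v0 j / vx x j) - 1) ∂P := by
    calc (d : ℝ) - ∑ j, ∫ x, vx x j / v0 j ∂P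
        = ∑ j : Fin d, (1 - ∫ x, vx x j / v0 j ∂P) := by
          rw [Finset.sum_sub_distrib]; simp
      _ ≤ _ := Finset.sum_le_sum (fun j _ => hsum j)
  linarith
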